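/- arXiv:2505.07008 — 4 statements merged into one kernel-verified Lean document; each statement's English description precedes it below -/
import Mathlib

section
/- The strategy refinement map Γ has the NE property: let each agent i have a finite action set A_i and fix functions Q_i, v_i with v_i(x) = Σ_{a} π_i(a|x) Q_i(x,a) for every state x. Define the advantage φ_{i,a}(x) = max(0, Q_i(x,a) − v_i(x)) and Γ(π)_i(a|x) = (π_i(a|x) + φ_{i,a}(x)) / (Σ_b π_i(b|x) + φ_{i,b}(x)). If π is a fixed point of Γ (i.e., Γ(π) = π), then for every agent i, state x, and action a, φ_{i,a}(x) = 0, equivalently v_i(x) ≥ max_a Q_i(x,a), hence v_i(x) = max_a Q_i(x,a). -/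
open Finset

/-- A fixed point of the strategy refinement map `Γ` has all advantages zero,
hence the value equals the maximal `Q`-value at every state. -/
theorem fixed_point_of_refinement_is_NE
    {I X : Type*} {A : I → Type*} [∀ i, Fintype (A i)] [∀ i, Nonempty (A i)]
    (π : ∀ i, X → A i → ℝ)
    (hπ0 : ∀ i x a, 0 ≤ π i x a)
    (hπ1 : ∀ i x, ∑ a, π i x a = 1)
    (Q : ∀ i, X → A i → ℝ)
    (v : ∀ i, X → ℝ)
    (hv : ∀ i x, v i x = ∑ a, π i x a * Q i x a)
    (φ : ∀ i, X → A i → ℝ)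
    (hφ : ∀ i x a, φ i x a = max 0 (Q i x a - v i x))
    (hfix : ∀ i x a,
      π i x a = (π i x a + φ i x a) / (∑ b, (π i x b + φ i x b))) :
    ∀ i x, (∀ a, φ i x a = 0) ∧
      (v i x ≥ ⨆ a, Q i x a) ∧ v i x = ⨆ a, Q i x a := by
  intro i x
  have hφ0 : ∀ a, 0 ≤ φ i x a := fun a => by rw [hφ]; exact le_max_left _ _
  set t : ℝ := ∑ b, φ i x b with ht
  have ht0 : 0 ≤ t := Finset.sum_nonneg fun b _ => hφ0 b
  have hS : (∑ b, (π i x b + φ i x b)) = 1 + t := by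
    rw [Finset.sum_add_distrib, hπ1]
  have hSpos : (0:ℝ) < 1 + t := by linarith
  -- from the fixed point equation: φ a = π a * t
  have hkey : ∀ a, φ i x a = π i x a * t := by
    intro a
    have h := hfix i x a
    rw [hS] at h
    have := (div_eq_iff (ne_of_gt hSpos)).mp h.symm
    nlinarith [this]
  -- the sum ∑ π a (Q a - v) = 0
  have hsum0 : ∑ a, π i x a * (Q i x a - v i x) = 0 := by
    have : ∑ a, π i x a * (Q i x a - v i x)
        = (∑ a, π i x a * Q i x a) - (∑ a, π i x a) * v i x := by
      rw [Finset.sum_mul, ← Finset.sum_sub_distrib]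
      exact Finset.sum_congr rfl fun a _ => by ring
    rw [this, hπ1, hv]; ring
  have htzero : t = 0 := by
    by_contra hne
    have htpos : 0 < t := lt_of_le_of_ne ht0 (Ne.symm hne)
    have hterm : ∀ a, π i x a * (Q i x a - v i x) = t * (π i x a)^2 := by
      intro a
      rcases eq_or_lt_of_le (hπ0 i x a) with h0 | hpos
      · rw [← h0]; ring
      · have hφpos : 0 < φ i x a := by rw [hkey]; positivity
        have heq : Q i x a - v i x = φ i x a := by
          rw [hφ]; rw [hφ] at hφpos
          rcases le_or_gt (Q i x a - v i x) 0 with h | h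
          · rw [max_eq_left h] at hφpos; linarith
          · rw [max_eq_right h.le]
        rw [heq, hkey a]; ring
    have hsq : (0:ℝ) < ∑ a, (π i x a)^2 := by
      obtain ⟨a, ha⟩ : ∃ a, π i x a ≠ 0 := by
        by_contra h
        push_neg at h
        have := hπ1 i x
        rw [Finset.sum_eq_zero (fun a _ => h a)] at this
        norm_num at this
      have : (0:ℝ) < (π i x a)^2 := by positivity
      exact lt_of_lt_of_le this (Finset.single_le_sum (f := fun a => (π i x a)^2)
        (fun b _ => sq_nonneg _) (Finset.mem_univ a))
    have : ∑ a, π i x a * (Q i x a - v i x) = t * ∑ a, (π i x a)^2 := by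
      rw [Finset.mul_sum]; exact Finset.sum_congr rfl fun a _ => hterm a
    rw [hsum0] at this
    nlinarith
  have hφzero : ∀ a, φ i x a = 0 := by
    intro a; rw [hkey, htzero, mul_zero]
  have hQle : ∀ a, Q i x a ≤ v i x := by
    intro a
    have h := hφzero a
    rw [hφ] at h
    have h2 := le_max_right 0 (Q i x a - v i x)
    rw [h] at h2
    linarith
  have hbdd : BddAbove (Set.range (Q i x)) := Set.Finite.bddAbove (Set.finite_range _)
  have hsuple : (⨆ a, Q i x a) ≤ v i x := ciSup_le hQle
  have hvle : v i x ≤ ⨆ a, Q i x a := by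
    rw [hv]
    calc ∑ a, π i x a * Q i x a ≤ ∑ a, π i x a * (⨆ a, Q i x a) := by
          apply Finset.sum_le_sum
          intro a _
          exact mul_le_mul_of_nonneg_left (le_ciSup hbdd a) (hπ0 i x a)
      _ = ⨆ a, Q i x a := by rw [← Finset.sum_mul, hπ1, one_mul]
  exact ⟨hφzero, hsuple, le_antisymm hvle hsuple⟩
end

section
/- Best response to N-Tits-for-M-Tats needs only M−1 memory of one's own actions: consider the deterministic strategy that defects unless its own previous M−1 actions were all defections, in which case it cooperates. Playing this against an opponent using N-Tits-for-M-Tats (who defects for N rounds only after observing M defections since its last retaliation, and cooperates otherwise), the resulting joint play is the infinite periodic sequence repeating (D,C) for M−1 rounds followed by (C,C) once; in particular the opponent cooperates at every round. -/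
/-- The agent's `(M−1)`-memory strategy: cooperate (`true`) exactly when its own
previous `M−1` actions were all defections, which generates the action sequence
"cooperate iff `t % M = M − 1`". -/
def agentAct (M : ℕ) : ℕ → Bool := fun t => decide (t % M = M - 1)

/-- The `N`-Tits-for-`M`-Tats opponent as a state machine. The state `(c, r)`
records the number of consecutive defections observed since the count was last
reset and the number of remaining retaliation rounds; when the count reaches `M`
the opponent retaliates by defecting for the next `N` rounds. -/
def oppState (M N : ℕ) (agent : ℕ → Bool) : ℕ → ℕ × ℕ
  | 0 => (0, 0)
  | t + 1 =>
      let st := oppState M N agent t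
      if 0 < st.2 then (st.1, st.2 - 1)
      else
        let c' := if agent t then 0 else st.1 + 1
        if M ≤ c' then (0, N) else (c', 0)

/-- The opponent cooperates (`true`) exactly when it is not retaliating. -/
def oppAct (M N : ℕ) (agent : ℕ → Bool) (t : ℕ) : Bool :=
  decide ((oppState M N agent t).2 = 0)

lemma oppState_eq (M N : ℕ) (hM : 1 ≤ M) :
    ∀ t, oppState M N (agentAct M) t = (t % M, 0) := by
  intro t
  induction t with
  | zero => simp [oppState]
  | succ t ih =>
      have hlt : t % M < M := Nat.mod_lt _ hM
      rw [oppState, ih]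
      simp only [agentAct]
      by_cases h : t % M = M - 1
      · have h0 : (t + 1) % M = 0 := by
          rcases eq_or_lt_of_le hM with h1 | h1
          · simp [← h1, Nat.mod_one]
          · rw [Nat.add_mod, Nat.mod_eq_of_lt h1, h, Nat.sub_add_cancel hM,
              Nat.mod_self]
        simp [h, h0, Nat.not_le.mpr hM]
      · have h2 : t % M + 1 < M := by omega
        have h1 : (t + 1) % M = t % M + 1 := by
          rw [Nat.add_mod, Nat.mod_eq_of_lt (by omega : (1:ℕ) < M),
            Nat.mod_eq_of_lt h2]
        simp [h, h1, Nat.not_le.mpr h2]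

/-- Playing the `(M−1)`-memory "defect `M−1` times, then cooperate once" strategy
against `N`-Tits-for-`M`-Tats, the opponent cooperates at every round and the joint
play is the periodic sequence repeating `(D, C)` for `M−1` rounds followed by one
`(C, C)`. -/
theorem br_to_N_tits_for_M_tats (M N : ℕ) (hM : 1 ≤ M) :
    ∀ t : ℕ,
      oppAct M N (agentAct M) t = true ∧
      (agentAct M t, oppAct M N (agentAct M) t) =
        (if t % M = M - 1 then (true, true) else (false, true)) := by
  intro t
  have hs := oppState_eq M N hM t
  have ho : oppAct M N (agentAct M) t = true := by simp [oppAct, hs]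
  refine ⟨ho, ?_⟩
  by_cases h : t % M = M - 1 <;> simp [h, ho, agentAct]
end

section
/- Profitable undercutting in the Traveler's Dilemma: if all players bid α ∈ A and there exists x with 0 < x < k and α − x ∈ A, then player i strictly improves by deviating to α − x: u_i(α−x, α·1) = α − x + k > α = u_i(α, α·1). Moreover, deviating upward to any α + y ∈ A with y > 0 strictly decreases i's utility: u_i(α+y, α·1) = α − k < α. -/
/-- Traveler's Dilemma utility for player `i` bidding `ai` when the minimum of the
opponents' bids is `aop`: `min(ai, aop) + k · sign(aop − ai)`. -/
noncomputable def tdU (k : ℝ) (ai aop : ℕ) : ℝ :=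
  ((min ai aop : ℕ) : ℝ) + k * Real.sign ((aop : ℝ) - (ai : ℝ))

/-- Profitable undercutting in the Traveler's Dilemma: if all opponents bid `α` and
`0 < x < k` with `α − x ∈ A`, deviating to `α − x` yields `α − x + k > α`, strictly
improving on bidding `α` (which yields `α`); deviating upward to `α + y ∈ A` with
`y > 0` yields `α − k < α`, strictly decreasing utility. -/
theorem td_profitable_undercut (A : Finset ℕ) (k : ℝ) (hk : 1 < k)
    (α x y : ℕ) (hαA : α ∈ A) (hx0 : 0 < x) (hxk : (x : ℝ) < k) (hxα : x ≤ α)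
    (hxA : α - x ∈ A) (hy0 : 0 < y) (hyA : α + y ∈ A) :
    tdU k α α = (α : ℝ) ∧
    tdU k (α - x) α = (α : ℝ) - (x : ℝ) + k ∧
    (α : ℝ) < (α : ℝ) - (x : ℝ) + k ∧
    tdU k (α + y) α = (α : ℝ) - k ∧
    (α : ℝ) - k < (α : ℝ) := by
  have h1 : tdU k α α = (α : ℝ) := by
    simp [tdU, Real.sign_zero]
  have h2 : tdU k (α - x) α = (α : ℝ) - (x : ℝ) + k := by
    have hmin : min (α - x) α = α - x := min_eq_left (Nat.sub_le _ _)
    have hxp : (0:ℝ) < (x:ℝ) := by exact_mod_cast hx0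
    have hpos : (0 : ℝ) < (α : ℝ) - ((α - x : ℕ) : ℝ) := by
      rw [Nat.cast_sub hxα]; linarith
    unfold tdU
    rw [hmin, Real.sign_of_pos hpos, Nat.cast_sub hxα]
    ring
  have h4 : tdU k (α + y) α = (α : ℝ) - k := by
    have hmin : min (α + y) α = α := min_eq_right (Nat.le_add_right _ _)
    have hneg : (α : ℝ) - ((α + y : ℕ) : ℝ) < 0 := by
      have : (0:ℝ) < (y:ℝ) := by exact_mod_cast hy0
      push_cast; linarith
    simp only [tdU, hmin, Real.sign_of_neg hneg]
    ring
  exact ⟨h1, h2, ⟨by linarith, h4, by linarith⟩⟩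
end

section
/- Every multi-player Traveler's Dilemma TD(N,k,A) has the finite improvement property: there is no infinite sequence of bid profiles a⁰, a¹, a² , ... where each a^{t+1} differs from a^t in exactly one player's bid and that player strictly increases her utility; consequently (since the game is finite) TD(N,k,A) has a generalized ordinal potential. -/
set_option linter.unusedSectionVars false
set_option maxHeartbeats 1000000

/-- The Traveler's Dilemma utility: `u_i(a) = min(a) + k · sign(min_{j≠i} a_j − a_i)`. -/
noncomputable def tdUtility {N : Type*} (k : ℝ) (i : N) (a : N → ℕ) : ℝ :=
  ((⨅ j, a j : ℕ) : ℝ) +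
    k * Real.sign (((⨅ j : {j : N // j ≠ i}, a (j : N) : ℕ) : ℝ) - (a i : ℝ))

namespace TDaux

variable {N : Type*} [Fintype N] [DecidableEq N] [Nontrivial N]

/-- minimum of the other players' bids -/
noncomputable def mo (i : N) (a : N → ℕ) : ℕ := ⨅ j : {j : N // j ≠ i}, a (j : N)

lemma iInf_le_apply {ι : Sort*} (f : ι → ℕ) (j : ι) : (⨅ x, f x) ≤ f j := by
  rw [← sInf_range]; exact Nat.sInf_le ⟨j, rfl⟩

lemma exists_iInf_eq {ι : Sort*} [Nonempty ι] (f : ι → ℕ) : ∃ j, (⨅ x, f x) = f j := by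
  have h := Nat.sInf_mem (Set.range_nonempty f)
  rw [← sInf_range]
  obtain ⟨j, hj⟩ := h
  exact ⟨j, hj.symm⟩

instance (i : N) : Nonempty {j : N // j ≠ i} := by
  obtain ⟨j, hj⟩ := exists_ne i
  exact ⟨⟨j, hj⟩⟩

lemma mo_le (i : N) (a : N → ℕ) {j : N} (h : j ≠ i) : mo i a ≤ a j :=
  iInf_le_apply (fun j : {j : N // j ≠ i} => a (j : N)) ⟨j, h⟩

lemma exists_mo_eq (i : N) (a : N → ℕ) : ∃ j : N, j ≠ i ∧ mo i a = a j := by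
  obtain ⟨⟨j, hj⟩, h⟩ := exists_iInf_eq (fun j : {j : N // j ≠ i} => a (j : N))
  exact ⟨j, hj, h⟩

lemma inf_eq_self_of_le (i : N) (a : N → ℕ) (h : a i ≤ mo i a) : (⨅ j, a j) = a i := by
  apply le_antisymm (iInf_le_apply a i)
  obtain ⟨j, hj⟩ := exists_iInf_eq a
  rw [hj]
  by_cases hji : j = i
  · rw [hji]
  · exact le_trans h (mo_le i a hji)

lemma inf_eq_mo_of_le (i : N) (a : N → ℕ) (h : mo i a ≤ a i) : (⨅ j, a j) = mo i a := by
  apply le_antisymm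
  · obtain ⟨j, hj, hm⟩ := exists_mo_eq i a
    rw [hm]; exact iInf_le_apply a j
  · obtain ⟨j, hj⟩ := exists_iInf_eq a
    rw [hj]
    by_cases hji : j = i
    · rw [hji]; exact h
    · exact mo_le i a hji

lemma u_lt {k : ℝ} (i : N) (a : N → ℕ) (h : a i < mo i a) :
    tdUtility k i a = (a i : ℝ) + k := by
  unfold tdUtility
  rw [show (⨅ j : {j : N // j ≠ i}, a (j : N)) = mo i a from rfl,
    inf_eq_self_of_le i a h.le,
    Real.sign_of_pos (by
      have : (a i : ℝ) < (mo i a : ℝ) := by exact_mod_cast h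
      linarith), mul_one]

lemma u_eq {k : ℝ} (i : N) (a : N → ℕ) (h : a i = mo i a) :
    tdUtility k i a = (a i : ℝ) := by
  unfold tdUtility
  rw [show (⨅ j : {j : N // j ≠ i}, a (j : N)) = mo i a from rfl,
    inf_eq_self_of_le i a h.le, show ((mo i a : ℝ) - (a i : ℝ)) = 0 by rw [h]; ring,
    Real.sign_zero, mul_zero, add_zero]

lemma u_gt {k : ℝ} (i : N) (a : N → ℕ) (h : mo i a < a i) :
    tdUtility k i a = (mo i a : ℝ) - k := by
  unfold tdUtility
  rw [show (⨅ j : {j : N // j ≠ i}, a (j : N)) = mo i a from rfl,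
    inf_eq_mo_of_le i a h.le,
    Real.sign_of_neg (by
      have : (mo i a : ℝ) < (a i : ℝ) := by exact_mod_cast h
      linarith)]
  ring

lemma mo_congr {i : N} {a b : N → ℕ} (hoff : ∀ j ≠ i, b j = a j) : mo i b = mo i a := by
  unfold mo
  exact iInf_congr (fun j => hoff j j.2)

/-- the key case analysis of an improvement step -/
lemma step_cases {k : ℝ} (hk : 0 < k) {a b : N → ℕ} (i : N)
    (hoff : ∀ j ≠ i, b j = a j) (hu : tdUtility k i b > tdUtility k i a) :
    (a i < mo i a ∧ a i < b i) ∨ (mo i a ≤ a i ∧ b i < a i ∧ b i ≤ mo i a) := by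
  have hmb : mo i b = mo i a := mo_congr hoff
  rcases lt_trichotomy (a i) (mo i a) with hx | hx | hx
  · left
    refine ⟨hx, ?_⟩
    rw [u_lt i a hx] at hu
    rcases lt_trichotomy (b i) (mo i b) with hy | hy | hy
    · rw [u_lt i b hy] at hu
      have : (a i : ℝ) < b i := by linarith
      exact_mod_cast this
    · rw [hy, hmb]; exact hx
    · rw [hmb] at hy; exact lt_trans hx hy
  · right
    refine ⟨hx.ge, ?_⟩
    rw [u_eq i a hx] at hu
    rcases lt_trichotomy (b i) (mo i b) with hy | hy | hy
    · rw [hmb] at hy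
      rw [← hx] at hy
      refine ⟨hy, ?_⟩
      rw [hx] at hy; exact hy.le
    · exfalso
      rw [u_eq i b hy, hy, hmb, ← hx] at hu
      exact lt_irrefl _ (by exact_mod_cast hu)
    · exfalso
      rw [u_gt i b hy, hmb] at hu
      have : (mo i a : ℝ) ≤ a i := by exact_mod_cast hx.ge
      linarith
  · right
    refine ⟨hx.le, ?_⟩
    rw [u_gt i a hx] at hu
    rcases lt_trichotomy (b i) (mo i b) with hy | hy | hy
    · rw [hmb] at hy
      exact ⟨lt_trans hy hx, hy.le⟩
    · rw [hmb] at hy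
      rw [hy]; exact ⟨hx, le_refl _⟩
    · exfalso
      rw [u_gt i b hy, hmb] at hu
      exact lt_irrefl _ hu

end TDaux

namespace TDaux
variable {N : Type*} [Fintype N] [DecidableEq N] [Nontrivial N]

def wit (k : ℝ) (s : ℕ → N → ℕ) (t : ℕ) (i : N) : Prop :=
  (∀ j ≠ i, s (t+1) j = s t j) ∧ tdUtility k i (s (t+1)) > tdUtility k i (s t)

def stepR (k : ℝ) (a b : N → ℕ) : Prop :=
  ∃ i, (∀ j ≠ i, b j = a j) ∧ tdUtility k i b > tdUtility k i a

def raiseAt (k : ℝ) (s : ℕ → N → ℕ) (t : ℕ) : Prop :=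
  ∃ i, wit k s t i ∧ s t i < mo i (s t)

lemma raise_min {a b : N → ℕ} (i : N) (hoff : ∀ j ≠ i, b j = a j)
    (hx : a i < mo i a) (hxy : a i < b i) : (⨅ j, a j) < ⨅ j, b j := by
  rw [inf_eq_self_of_le i a hx.le]
  obtain ⟨j, hj⟩ := exists_iInf_eq b
  rw [hj]
  by_cases hji : j = i
  · rw [hji]; exact hxy
  · rw [hoff j hji]; exact lt_of_lt_of_le hx (mo_le i a hji)

lemma sum_lt {a b : N → ℕ} (i : N) (hoff : ∀ j ≠ i, b j = a j)
    (h : b i < a i) : (∑ j, b j) < ∑ j, a j := by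
  have h1 : ∑ j ∈ Finset.univ.erase i, b j = ∑ j ∈ Finset.univ.erase i, a j :=
    Finset.sum_congr rfl (fun j hj => hoff j (Finset.mem_erase.mp hj).1)
  have h2 := Finset.sum_erase_add Finset.univ b (Finset.mem_univ i)
  have h3 := Finset.sum_erase_add Finset.univ a (Finset.mem_univ i)
  omega

lemma mod_succ (r T : ℕ) (hT : 0 < T) :
    (r+1) % T = if r % T + 1 = T then 0 else r % T + 1 := by
  rcases Nat.lt_or_ge (r % T + 1) T with h | h
  · rw [if_neg (by omega)]
    conv_lhs => rw [← Nat.div_add_mod r T]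
    rw [Nat.add_assoc, Nat.mul_add_mod]
    exact Nat.mod_eq_of_lt h
  · have hmod := Nat.mod_lt r hT
    have he : r % T + 1 = T := by omega
    rw [if_pos he]
    conv_lhs => rw [← Nat.div_add_mod r T]
    rw [Nat.add_assoc, Nat.mul_add_mod, he, Nat.mod_self]

lemma pred_raise {k : ℝ} (hk0 : 0 < k) {s : ℕ → N → ℕ}
    (hstep : ∀ t, stepR k (s t) (s (t+1)))
    (hnsp : ¬ ∃ t i, wit k s t i ∧ wit k s (t+1) i) (t : ℕ)
    (h : raiseAt k s (t+1)) :
    raiseAt k s t ∧ (⨅ j, s t j) < ⨅ j, s (t+1) j := by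
  obtain ⟨i, ⟨hoff, hu⟩, hr⟩ := h
  obtain ⟨i', hoff', hu'⟩ := hstep t
  by_cases hii : i' = i
  · subst hii; exact absurd ⟨t, i', ⟨hoff', hu'⟩, hoff, hu⟩ hnsp
  · rcases step_cases hk0 i' hoff' hu' with ⟨h1, h2⟩ | ⟨h1, h2, h3⟩
    · exact ⟨⟨i', ⟨hoff', hu'⟩, h1⟩, raise_min i' hoff' h1 h2⟩
    · exfalso
      have e1 : mo i' (s t) ≤ s t i := mo_le i' (s t) (Ne.symm hii)
      have e2 : s (t+1) i = s t i := hoff' i (Ne.symm hii)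
      have e3 : mo i (s (t+1)) ≤ s (t+1) i' := mo_le i (s (t+1)) hii
      omega

theorem no_cycle {k : ℝ} (hk0 : 0 < k) :
    ∀ T, 0 < T → ∀ s : ℕ → N → ℕ,
      (∀ t, stepR k (s t) (s (t+1))) → (∀ t, s (t+T) = s t) → False := by
  intro T
  induction T using Nat.strong_induction_on with
  | _ T IH =>
  intro hT s hstep hper
  rcases Nat.lt_or_ge T 2 with hT2 | hT2
  · -- T = 1
    have hT1 : T = 1 := by omega
    obtain ⟨i, hoff, hu⟩ := hstep 0
    have e : s (0+1) = s 0 := by have := hper 0; rwa [hT1] at this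
    rw [e] at hu
    exact lt_irrefl _ hu
  by_cases hR : ∃ t, raiseAt k s t
  case neg =>
    -- all steps lower the sum
    have hdec : ∀ t, (∑ j, s (t+1) j) < ∑ j, s t j := by
      intro t
      obtain ⟨i, hoff, hu⟩ := hstep t
      rcases step_cases hk0 i hoff hu with ⟨h1, _⟩ | ⟨_, h2, _⟩
      · exact absurd ⟨t, i, ⟨hoff, hu⟩, h1⟩ hR
      · exact sum_lt i hoff h2
    have hmono : ∀ t, (∑ j, s t j) + t ≤ ∑ j, s 0 j := by
      intro t; induction t with
      | zero => omega
      | succ n ih => have := hdec n; omega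
    have hTeq : (∑ j, s T j) = ∑ j, s 0 j := by
      have := hper 0; rw [Nat.zero_add] at this; rw [this]
    have := hmono T; omega
  case pos =>
    obtain ⟨t₀, h₀⟩ := hR
    by_cases hsp : ∃ t i, wit k s t i ∧ wit k s (t+1) i
    · -- splice the two same-player steps; shorter cycle
      obtain ⟨t, i, ⟨ho1, hu1⟩, ho2, hu2⟩ := hsp
      have hT'pos : 0 < T - 1 := by omega
      apply IH (T-1) (by omega) hT'pos (fun r => s (t + 2 + r % (T-1)))
      · intro r
        rcases eq_or_ne (r % (T-1) + 1) (T-1) with hc | hc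
        · rw [mod_succ r (T-1) hT'pos, if_pos hc]
          rw [show t + 2 + 0 = t + 2 from rfl]
          rw [show t + 2 + r % (T-1) = t + T by omega, hper t]
          exact ⟨i, fun j hj => by rw [ho2 j hj, ho1 j hj], lt_trans hu1 hu2⟩
        · rw [mod_succ r (T-1) hT'pos, if_neg hc]
          rw [show t + 2 + (r % (T-1) + 1) = (t + 2 + r % (T-1)) + 1 by omega]
          exact hstep _
      · intro r
        rw [Nat.add_mod_right]
    · -- descent: raises go back forever, min strictly decreasing
      have hper_mul : ∀ c t, s (t + T*c) = s t := by
        intro c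
        induction c with
        | zero => intro t; rw [Nat.mul_zero, Nat.add_zero]
        | succ c ih =>
          intro t
          rw [show t + T*(c+1) = (t + T*c) + T by ring, hper, ih]
      have rshift : ∀ c, raiseAt k s (t₀ + T*c) := by
        intro c
        obtain ⟨i₀, ⟨ho₀, hu₀⟩, hr₀⟩ := h₀
        have e1 : s (t₀ + T*c) = s t₀ := hper_mul c t₀
        have e2 : s (t₀ + T*c + 1) = s (t₀+1) := by
          rw [show t₀ + T*c + 1 = (t₀+1) + T*c by omega]; exact hper_mul c (t₀+1)
        exact ⟨i₀, ⟨fun j hj => by rw [e1, e2]; exact ho₀ j hj,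
          by rw [e1, e2]; exact hu₀⟩, by rw [e1]; exact hr₀⟩
      have key : ∀ d t, raiseAt k s (t + d) → (⨅ j, s t j) + d ≤ ⨅ j, s (t + d) j := by
        intro d
        induction d with
        | zero => intro t _; simp
        | succ d ih =>
          intro t hRd
          rw [show t + (d+1) = (t+d)+1 by omega]
          have hpr := pred_raise hk0 hstep hsp (t + d) hRd
          have h1 := ih t hpr.1
          have h2 := hpr.2
          omega
      set B := ⨅ j, s t₀ j with hB
      have hfin := key (T*(B+1)) t₀ (rshift (B+1))
      have heq : (⨅ j, s (t₀ + T*(B+1)) j) = B := by rw [hper_mul (B+1) t₀]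
      have hpos : 1 ≤ T*(B+1) := Nat.one_le_iff_ne_zero.mpr (by positivity)
      omega

end TDaux


namespace TDaux
variable {N : Type*} [Fintype N] [DecidableEq N] [Nontrivial N]

lemma chain_of_rtg {α : Type*} {r : α → α → Prop} {x y : α}
    (h : Relation.ReflTransGen r x y) :
    ∃ n, ∃ f : ℕ → α, f 0 = x ∧ f n = y ∧ ∀ t < n, r (f t) (f (t+1)) := by
  induction h with
  | refl => exact ⟨0, fun _ => x, rfl, rfl, by omega⟩
  | @tail b c hxb hbc ih =>
    obtain ⟨n, f, h0, hn, hs⟩ := ih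
    refine ⟨n+1, fun t => if t ≤ n then f t else c, ?_, ?_, ?_⟩
    · simpa using h0
    · simp
    · intro t ht
      rcases Nat.lt_or_ge t n with h1 | h1
      · simpa [Nat.le_of_lt h1, Nat.succ_le_of_lt h1] using hs t h1
      · have htn : t = n := by omega
        subst htn
        simpa [hn] using hbc

lemma no_cycle' {k : ℝ} (hk0 : 0 < k) (T : ℕ) (hT : 0 < T) (f : ℕ → N → ℕ)
    (hsteps : ∀ t < T, stepR k (f t) (f (t+1))) (hclose : f T = f 0) : False := by
  apply no_cycle hk0 T hT (fun r => f (r % T))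
  · intro r
    rcases eq_or_ne (r % T + 1) T with hc | hc
    · rw [mod_succ r T hT, if_pos hc]
      have h := hsteps (r % T) (Nat.mod_lt _ hT)
      rw [hc, hclose] at h
      exact h
    · rw [mod_succ r T hT, if_neg hc]
      exact hsteps (r % T) (Nat.mod_lt _ hT)
  · intro r; rw [Nat.add_mod_right]

end TDaux

/-- Every multi-player Traveler's Dilemma `TD(N,k,A)` has the finite improvement
property: there is no infinite sequence of profiles in which each successor differs
from its predecessor in exactly one player's bid and strictly increases that
player's utility. Consequently, the game admits a generalized ordinal potential. -/
theorem td_finite_improvement_property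
    {N : Type*} [Fintype N] [DecidableEq N] [Nontrivial N]
    (A : Finset ℕ) (hA : A.Nonempty) (k : ℝ) (hk : 1 < k) :
    (¬ ∃ seq : ℕ → (N → ℕ),
        (∀ t i, seq t i ∈ A) ∧
        (∀ t, ∃ i, (∀ j, j ≠ i → seq (t + 1) j = seq t j) ∧
          tdUtility k i (seq (t + 1)) > tdUtility k i (seq t))) ∧
    ∃ P : (N → ℕ) → ℝ, ∀ a : N → ℕ, (∀ i, a i ∈ A) →
      ∀ i : N, ∀ b ∈ A,
        tdUtility k i (Function.update a i b) > tdUtility k i a →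
          P (Function.update a i b) > P a := by
  classical
  have hk0 : (0:ℝ) < k := lt_trans one_pos hk
  constructor
  · rintro ⟨seq, hmem, hstep⟩
    have hstep' : ∀ t, TDaux.stepR k (seq t) (seq (t+1)) := fun t => hstep t
    have main : ∀ u v : ℕ, u < v → seq u = seq v → False := by
      intro u v huv he
      refine TDaux.no_cycle' hk0 (v - u) (by omega) (fun r => seq (u + r))
        (fun t _ => hstep' (u + t)) ?_
      show seq (u + (v - u)) = seq (u + 0)
      rw [show u + (v - u) = v by omega, Nat.add_zero]
      exact he.symm
    obtain ⟨t1, t2, hne, heq⟩ := Finite.exists_ne_map_eq_of_infinite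
      (fun t : ℕ => (fun i : N => (⟨seq t i, hmem t i⟩ : {x // x ∈ A})))
    have hseq : seq t1 = seq t2 := funext fun i => congrArg Subtype.val (congrFun heq i)
    rcases hne.lt_or_gt with h | h
    · exact main t1 t2 h hseq
    · exact main t2 t1 h hseq.symm
  · refine ⟨fun a => ((((Fintype.piFinset fun _ : N => A)).filter
      (fun c => Relation.ReflTransGen (TDaux.stepR k) c a)).card : ℝ), ?_⟩
    intro a ha i b hb hu
    set b' := Function.update a i b with hb'def
    have hstepab : TDaux.stepR k a b' :=
      ⟨i, fun j hj => Function.update_of_ne hj _ _, hu⟩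
    have hsub : ((Fintype.piFinset fun _ : N => A)).filter
        (fun c => Relation.ReflTransGen (TDaux.stepR k) c a) ⊆
        ((Fintype.piFinset fun _ : N => A)).filter
        (fun c => Relation.ReflTransGen (TDaux.stepR k) c b') := by
      intro c hc
      simp only [Finset.mem_filter] at hc ⊢
      exact ⟨hc.1, hc.2.tail hstepab⟩
    have hmem' : b' ∈ (Fintype.piFinset fun _ : N => A) := by
      rw [Fintype.mem_piFinset]
      intro j
      by_cases hj : j = i
      · subst hj; rw [hb'def, Function.update_self]; exact hb
      · rw [hb'def, Function.update_of_ne hj]; exact ha j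
    have hmemb' : b' ∈ ((Fintype.piFinset fun _ : N => A)).filter
        (fun c => Relation.ReflTransGen (TDaux.stepR k) c b') :=
      Finset.mem_filter.mpr ⟨hmem', Relation.ReflTransGen.refl⟩
    have hnot : b' ∉ ((Fintype.piFinset fun _ : N => A)).filter
        (fun c => Relation.ReflTransGen (TDaux.stepR k) c a) := by
      intro hmm
      have hrtg : Relation.ReflTransGen (TDaux.stepR k) b' a :=
        (Finset.mem_filter.mp hmm).2
      obtain ⟨n, f, h0, hn, hs⟩ := TDaux.chain_of_rtg hrtg
      refine TDaux.no_cycle' hk0 (n+1) (Nat.succ_pos n)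
        (fun t => if t ≤ n then f t else b') ?_ ?_
      · intro t ht
        rcases Nat.lt_or_ge t n with h1 | h1
        · simpa [Nat.le_of_lt h1, Nat.succ_le_of_lt h1] using hs t h1
        · have htn : t = n := by omega
          subst htn
          simp only [le_refl, if_pos, Nat.lt_irrefl]
          rw [if_neg (by omega), hn]
          exact hstepab
      · simp [h0]
    have hlt := Finset.card_lt_card ⟨hsub, fun hrev => hnot (hrev hmemb')⟩
    show ((((Fintype.piFinset fun _ : N => A)).filter
        (fun c => Relation.ReflTransGen (TDaux.stepR k) c b')).card : ℝ) >
      ((((Fintype.piFinset fun _ : N => A)).filter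
        (fun c => Relation.ReflTransGen (TDaux.stepR k) c a)).card : ℝ)
    exact_mod_cast hlt
end
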